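/- Let J = H_3(Θ) with Θ the positive-definite octonions over ℚ, and let F be a real quadratic étale extension of ℚ embedded in the lower-right 2x2 block H_2(Θ) ⊂ J. If V ∈ J is rank one and V is orthogonal (under the trace pairing) to the image of F in H_2(Θ), then V lies in ℚ·e_{11}, where e_{11} is the matrix with (1,1)-entry 1 and all other entries 0. -/
import Mathlib


/-!
STATEMENT 3: Let J = H₃(Θ) with Θ the positive-definite octonions over ℚ, and
let F be a real quadratic étale extension of ℚ embedded ℚ-linearly into the
lower-right 2×2 block H₂(Θ) ⊂ J (i.e. with c₁, x₂, x₃ coordinates zero),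
compatibly with norms (the quadratic norm c₂c₃ - N(x₁) of H₂(Θ) restricts to
the algebra norm of F) and units (1_F ↦ diag(0,1,1)).  "Real" is recorded by
the fact that the norm form of F takes a negative value.  If V ∈ J is rank one
(V^# = 0, V ≠ 0) and V is orthogonal to the image of F under the trace
pairing, then V ∈ ℚ·e₁₁, i.e. all coordinates of V other than c₁ vanish.
-/

namespace Stmt3

structure OctAlg (C : Type) [NonAssocRing C] [Module ℚ C] where
  conj : C →ₗ[ℚ] C
  N : QuadraticForm ℚ C
  conj_conj : ∀ x, conj (conj x) = x
  conj_one : conj 1 = 1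
  conj_mul : ∀ x y, conj (x * y) = conj y * conj x
  mul_conj : ∀ x : C, x * conj x = N x • (1 : C)
  conj_mul_self : ∀ x : C, conj x * x = N x • (1 : C)
  norm_mul : ∀ x y, N (x * y) = N x * N y
  norm_one : N 1 = 1
  dim8 : Module.finrank ℚ C = 8

variable {Θ : Type} [NonAssocRing Θ] [Module ℚ Θ]

abbrev J (C : Type) := (ℚ × ℚ × ℚ) × (C × C × C)

def sharp (D : OctAlg Θ) (X : J Θ) : J Θ :=
  ((X.1.2.1 * X.1.2.2 - D.N X.2.1,
    X.1.2.2 * X.1.1 - D.N X.2.2.1,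
    X.1.1 * X.1.2.1 - D.N X.2.2.2),
   (D.conj (X.2.2.1 * X.2.2.2) - X.1.1 • X.2.1,
    D.conj (X.2.2.2 * X.2.1) - X.1.2.1 • X.2.2.1,
    D.conj (X.2.1 * X.2.2.1) - X.1.2.2 • X.2.2.2))

def pairJ (D : OctAlg Θ) (X Y : J Θ) : ℚ :=
  X.1.1 * Y.1.1 + X.1.2.1 * Y.1.2.1 + X.1.2.2 * Y.1.2.2
    + QuadraticMap.polar D.N X.2.1 Y.2.1
    + QuadraticMap.polar D.N X.2.2.1 Y.2.2.1
    + QuadraticMap.polar D.N X.2.2.2 Y.2.2.2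

theorem stmt3 (D : OctAlg Θ)
    -- N is positive definite
    (hpos : ∀ x : Θ, 0 ≤ D.N x) (hdef : ∀ x : Θ, D.N x = 0 → x = 0)
    -- F is a quadratic étale ℚ-algebra...
    (F : Type) [CommRing F] [Algebra ℚ F] [Module.Free ℚ F] [Module.Finite ℚ F]
    (hdim : Module.finrank ℚ F = 2)
    -- ...embedded ℚ-linearly into H₂(Θ) ⊂ J...
    (ι : F →ₗ[ℚ] J Θ) (hinj : Function.Injective ι)
    (hH2 : ∀ f : F, (ι f).1.1 = 0 ∧ (ι f).2.2.1 = 0 ∧ (ι f).2.2.2 = 0)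
    -- ...sending 1 to diag(0,1,1) and matching norms...
    (hone : ι 1 = ((0, 1, 1), (0, 0, 0)))
    (hnorm : ∀ f : F, (ι f).1.2.1 * (ι f).1.2.2 - D.N (ι f).2.1 = Algebra.norm ℚ f)
    -- ...with F real (totally real étale): its norm form takes a negative value
    (hreal : ∃ f : F, Algebra.norm ℚ f < 0)
    -- V is rank one and orthogonal to the image of F
    (V : J Θ) (hrank : sharp D V = 0) (hne : V ≠ 0)
    (hperp : ∀ f : F, pairJ D V (ι f) = 0) :
    V.1.2.1 = 0 ∧ V.1.2.2 = 0 ∧ V.2 = (0 : Θ × Θ × Θ) := by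
  have h1 := hperp 1
  rw [hone] at h1
  simp only [pairJ, QuadraticMap.polar_zero_right, mul_zero, mul_one, add_zero,
    zero_add] at h1
  -- h1 : V.1.2.1 + V.1.2.2 = 0
  have hs1 : V.1.2.1 * V.1.2.2 - D.N V.2.1 = 0 := congrArg (fun X : J Θ => X.1.1) hrank
  have hs2 : V.1.2.2 * V.1.1 - D.N V.2.2.1 = 0 := congrArg (fun X : J Θ => X.1.2.1) hrank
  have hs3 : V.1.1 * V.1.2.1 - D.N V.2.2.2 = 0 := congrArg (fun X : J Θ => X.1.2.2) hrank
  have hN1 : 0 ≤ D.N V.2.1 := hpos _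
  have hc2 : V.1.2.1 = 0 := by nlinarith
  have hc3 : V.1.2.2 = 0 := by linarith
  refine ⟨hc2, hc3, ?_⟩
  have hx1 : V.2.1 = 0 := hdef _ (by rw [hc2] at hs1; linarith)
  have hx2 : V.2.2.1 = 0 := hdef _ (by rw [hc3] at hs2; linarith)
  have hx3 : V.2.2.2 = 0 := hdef _ (by rw [hc2] at hs3; linarith)
  exact Prod.ext hx1 (Prod.ext hx2 hx3)

end Stmt3
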